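/- The optimal value of the ILAP P (minimum of Σ_{v∈V} θ_v(x_v) over feasible assignments x for P) equals the optimal value of the LAP P' (minimum of Σ_{w∈V'} θ'_w(x'_w) over feasible assignments x' for P'). -/

import Mathlib

open Finset

/-! Incomplete LAP (ILAP): labels are `Option K`, the dummy label `#` is `none`.
The reduced complete LAP instance `P'` lives on `V ⊕ K` (both partitions equal
`V ∪ (L ∖ {#})`). -/

section IlapDefs

variable {V K : Type*} [Fintype V] [Fintype K] [DecidableEq V] [DecidableEq K]

/-- Feasibility for the ILAP: allowed labels, and each non-dummy label used at most once. -/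
def IlapFeasible (Lab : V → Finset (Option K)) (x : V → Option K) : Prop :=
  (∀ v, x v ∈ Lab v) ∧ ∀ u v k, x u = some k → x v = some k → u = v

/-- Cost of an ILAP assignment. -/
def ilapCost (θ : V → Option K → ℝ) (x : V → Option K) : ℝ := ∑ v, θ v (x v)

/-- Allowed labels of the reduced LAP instance `P'` on `V ⊕ K`:
`L'_v = (L_v ∖ {#}) ∪ {v}` and `L'_ℓ = V_ℓ ∪ {ℓ}`. -/
def redLab (Lab : V → Finset (Option K)) : V ⊕ K → Finset (V ⊕ K)
  | Sum.inl v => insert (Sum.inl v) ((univ.filter fun k => some k ∈ Lab v).image Sum.inr)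
  | Sum.inr k => insert (Sum.inr k) ((univ.filter fun v => some k ∈ Lab v).image Sum.inl)

/-- Costs of the reduced LAP instance `P'`: halved original costs between `V` and `L ∖ {#}`,
`θ_v(#)` on the vertex diagonal and `0` on the label diagonal. -/
noncomputable def redCost (θ : V → Option K → ℝ) : V ⊕ K → V ⊕ K → ℝ
  | Sum.inl v, Sum.inr k => θ v (some k) / 2
  | Sum.inr k, Sum.inl v => θ v (some k) / 2
  | Sum.inl v, Sum.inl _ => θ v none
  | Sum.inr _, Sum.inr _ => 0

/-- Feasibility for the primal LP formulation of the ILAP. -/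
def IlapPrimalFeasible (Lab : V → Finset (Option K)) (μ : V → Option K → ℝ) : Prop :=
  (∀ v ℓ, ℓ ∈ Lab v → 0 ≤ μ v ℓ) ∧
  (∀ v ℓ, ℓ ∉ Lab v → μ v ℓ = 0) ∧
  (∀ v, ∑ ℓ ∈ Lab v, μ v ℓ = 1) ∧
  (∀ k : K, ∑ v ∈ univ.filter (fun v => some k ∈ Lab v), μ v (some k) ≤ 1)

/-- Objective of the primal LP formulation of the ILAP. -/
def ilapPrimalObj (θ : V → Option K → ℝ) (Lab : V → Finset (Option K))
    (μ : V → Option K → ℝ) : ℝ :=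
  ∑ v, ∑ ℓ ∈ Lab v, θ v ℓ * μ v ℓ

/-- The set of optimal solutions of the primal LP formulation of the ILAP. -/
def IlapPrimalOpt (θ : V → Option K → ℝ) (Lab : V → Finset (Option K)) :
    Set (V → Option K → ℝ) :=
  {μ | IlapPrimalFeasible Lab μ ∧
    ∀ ν, IlapPrimalFeasible Lab ν → ilapPrimalObj θ Lab μ ≤ ilapPrimalObj θ Lab ν}

/-- Feasibility for the dual LP formulation of the ILAP: `β ≤ 0` and
`α_v + [ℓ ≠ #]·β_ℓ ≤ θ_v(ℓ)` on allowed pairs. -/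
def IlapDualFeasible (θ : V → Option K → ℝ) (Lab : V → Finset (Option K))
    (p : (V → ℝ) × (K → ℝ)) : Prop :=
  (∀ k, p.2 k ≤ 0) ∧
  ∀ v ℓ, ℓ ∈ Lab v →
    p.1 v + (match ℓ with | some k => p.2 k | none => 0) ≤ θ v ℓ

/-- Objective of the dual LP formulation of the ILAP. -/
def ilapDualObj (p : (V → ℝ) × (K → ℝ)) : ℝ := ∑ v, p.1 v + ∑ k, p.2 k

/-- The set of optimal solutions of the dual LP formulation of the ILAP. -/
def IlapDualOpt (θ : V → Option K → ℝ) (Lab : V → Finset (Option K)) :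
    Set ((V → ℝ) × (K → ℝ)) :=
  {p | IlapDualFeasible θ Lab p ∧
    ∀ q, IlapDualFeasible θ Lab q → ilapDualObj q ≤ ilapDualObj p}

end IlapDefs

section LAPDefs

variable {V L : Type*} [Fintype V] [Fintype L] [DecidableEq V] [DecidableEq L]

/-- Feasibility for the primal LP of a (complete) LAP. -/
def PrimalFeasible (Lab : V → Finset L) (μ : V → L → ℝ) : Prop :=
  (∀ v ℓ, ℓ ∈ Lab v → 0 ≤ μ v ℓ) ∧
  (∀ v ℓ, ℓ ∉ Lab v → μ v ℓ = 0) ∧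
  (∀ v, ∑ ℓ ∈ Lab v, μ v ℓ = 1) ∧
  (∀ ℓ : L, ∑ v ∈ univ.filter (fun v => ℓ ∈ Lab v), μ v ℓ = 1)

/-- Objective of the primal LP of a (complete) LAP. -/
def primalObj (θ : V → L → ℝ) (Lab : V → Finset L) (μ : V → L → ℝ) : ℝ :=
  ∑ v, ∑ ℓ ∈ Lab v, θ v ℓ * μ v ℓ

/-- The set of optimal solutions of the primal LP of a (complete) LAP. -/
def PrimalOpt (θ : V → L → ℝ) (Lab : V → Finset L) : Set (V → L → ℝ) :=
  {μ | PrimalFeasible Lab μ ∧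
    ∀ ν, PrimalFeasible Lab ν → primalObj θ Lab μ ≤ primalObj θ Lab ν}

/-- Feasibility for the dual LP of a (complete) LAP. -/
def DualFeasible (θ : V → L → ℝ) (Lab : V → Finset L) (p : (V → ℝ) × (L → ℝ)) : Prop :=
  ∀ v ℓ, ℓ ∈ Lab v → p.1 v + p.2 ℓ ≤ θ v ℓ

/-- Objective of the dual LP of a (complete) LAP. -/
def dualObj (p : (V → ℝ) × (L → ℝ)) : ℝ := ∑ v, p.1 v + ∑ ℓ, p.2 ℓ

/-- The set of optimal solutions of the dual LP of a (complete) LAP. -/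
def DualOpt (θ : V → L → ℝ) (Lab : V → Finset L) : Set ((V → ℝ) × (L → ℝ)) :=
  {p | DualFeasible θ Lab p ∧ ∀ q, DualFeasible θ Lab q → dualObj q ≤ dualObj p}

end LAPDefs

/-!
A feasible assignment `x` of the ILAP becomes a feasible permutation of `P'` of the same cost:
the involution swapping `v` and `x v` whenever `x v ≠ #`. Conversely, a feasible permutation `σ`
of `P'` yields two feasible ILAP assignments, read off from `σ` and from `σ⁻¹` on the vertices,
and the cost of `σ` is the average of their costs, because each halved cost `θ_v(ℓ)/2` is charged
once along `σ` and once along `σ⁻¹`. Hence both problems have the same lower bounds and the same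
minimum.
-/

theorem isLeast_iff_of_subset_of_forall_eq_midpoint {𝕜 : Type*} [Field 𝕜] [LinearOrder 𝕜]
    [IsStrictOrderedRing 𝕜] {S T : Set 𝕜} (hST : S ⊆ T)
    (hTS : ∀ t ∈ T, ∃ a ∈ S, ∃ b ∈ S, t = (a + b) / 2) (m : 𝕜) :
    IsLeast S m ↔ IsLeast T m := by
  have hbounds : lowerBounds S = lowerBounds T := by
    refine subset_antisymm (fun m hm t ht => ?_) (lowerBounds_mono_set hST)
    obtain ⟨a, ha, b, hb, rfl⟩ := hTS t ht
    linarith [hm ha, hm hb]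
  refine ⟨fun ⟨hmS, hm⟩ => ⟨hST hmS, hbounds ▸ hm⟩, fun ⟨hmT, hm⟩ => ?_⟩
  obtain ⟨a, ha, b, hb, rfl⟩ := hTS _ hmT
  have hab : (a + b) / 2 ≤ a ∧ (a + b) / 2 ≤ b := ⟨hm (hST ha), hm (hST hb)⟩
  refine ⟨?_, hbounds ▸ hm⟩
  rwa [show (a + b) / 2 = a by linarith]

section Assignments

variable {V K : Type*}

def ilapOfPerm (σ : (V ⊕ K) ≃ (V ⊕ K)) (v : V) : Option K := (σ (Sum.inl v)).getRight?

noncomputable def vertexCost (θ : V → Option K → ℝ) : V ⊕ K → V ⊕ K → ℝ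
  | Sum.inl v, w' => θ v w'.getRight?
  | Sum.inr _, _ => 0

theorem sum_vertexCost_perm [Fintype V] [Fintype K] (θ : V → Option K → ℝ)
    (σ : (V ⊕ K) ≃ (V ⊕ K)) :
    ∑ w, vertexCost θ w (σ w) = ilapCost θ (ilapOfPerm σ) := by
  simp [Fintype.sum_sum_type, vertexCost, ilapCost, ilapOfPerm]

variable [Fintype V] [DecidableEq K]

noncomputable def permOfIlap (x : V → Option K) : V ⊕ K → V ⊕ K
  | Sum.inl v => (x v).elim (Sum.inl v) Sum.inr
  | Sum.inr k => if h : ∃ v, x v = some k then Sum.inl h.choose else Sum.inr k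

theorem involutive_permOfIlap {Lab : V → Finset (Option K)} {x : V → Option K}
    (hx : IlapFeasible Lab x) : Function.Involutive (permOfIlap x) := by
  rintro (v | k)
  · rcases hxv : x v with _ | k
    · simp [permOfIlap, hxv]
    · have hex : ∃ u, x u = some k := ⟨v, hxv⟩
      simp [permOfIlap, hxv, hex, hx.2 _ _ _ hex.choose_spec hxv]
  · by_cases hex : ∃ v, x v = some k
    · simp [permOfIlap, hex, hex.choose_spec]
    · simp [permOfIlap, hex]

theorem ilapOfPerm_toPerm_permOfIlap {Lab : V → Finset (Option K)} {x : V → Option K}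
    (hx : IlapFeasible Lab x) : ilapOfPerm ((involutive_permOfIlap hx).toPerm _) = x := by
  funext v
  rcases hxv : x v with _ | k <;> simp [ilapOfPerm, permOfIlap, hxv]

end Assignments

section Reduction

variable {V K : Type*} [Fintype V] [Fintype K] [DecidableEq V] [DecidableEq K]
  {Lab : V → Finset (Option K)}

@[simp]
theorem inl_mem_redLab_inl {u v : V} : Sum.inl u ∈ redLab Lab (Sum.inl v) ↔ u = v := by
  simp [redLab]

@[simp]
theorem inr_mem_redLab_inl {k : K} {v : V} :
    Sum.inr k ∈ redLab Lab (Sum.inl v) ↔ some k ∈ Lab v := by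
  simp [redLab]

@[simp]
theorem inl_mem_redLab_inr {v : V} {k : K} :
    Sum.inl v ∈ redLab Lab (Sum.inr k) ↔ some k ∈ Lab v := by
  simp [redLab]

@[simp]
theorem inr_mem_redLab_inr {k k' : K} : Sum.inr k' ∈ redLab Lab (Sum.inr k) ↔ k' = k := by
  simp [redLab]

theorem mem_redLab_comm {w w' : V ⊕ K} : w' ∈ redLab Lab w ↔ w ∈ redLab Lab w' := by
  rcases w with v | k <;> rcases w' with v' | k' <;> simp [eq_comm]

theorem symm_mem_redLab {σ : (V ⊕ K) ≃ (V ⊕ K)} (hσ : ∀ w, σ w ∈ redLab Lab w) (w : V ⊕ K) :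
    σ.symm w ∈ redLab Lab w := by
  simpa [mem_redLab_comm] using hσ (σ.symm w)

theorem ilapFeasible_ilapOfPerm (hdum : ∀ v, (none : Option K) ∈ Lab v)
    {σ : (V ⊕ K) ≃ (V ⊕ K)} (hσ : ∀ w, σ w ∈ redLab Lab w) :
    IlapFeasible Lab (ilapOfPerm σ) := by
  refine ⟨fun v => ?_, fun u v k hu hv => ?_⟩
  · have hv := hσ (Sum.inl v)
    rcases hσv : σ (Sum.inl v) with u | k <;> simp_all [ilapOfPerm]
  · simp only [ilapOfPerm, Sum.getRight?_eq_some_iff] at hu hv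
    simpa using σ.injective (hu.trans hv.symm)

theorem permOfIlap_mem_redLab {x : V → Option K} (hx : IlapFeasible Lab x) (w : V ⊕ K) :
    permOfIlap x w ∈ redLab Lab w := by
  rcases w with v | k
  · have hv := hx.1 v
    rcases hxv : x v with _ | k <;> simp_all [permOfIlap]
  · by_cases hex : ∃ v, x v = some k
    · simpa [permOfIlap, hex, hex.choose_spec] using hx.1 hex.choose
    · simp [permOfIlap, hex]

theorem redCost_eq_of_mem_redLab (θ : V → Option K → ℝ) {w w' : V ⊕ K}
    (h : w' ∈ redLab Lab w) :
    redCost θ w w' = (vertexCost θ w w' + vertexCost θ w' w) / 2 := by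
  rcases w with v | k <;> rcases w' with v' | k'
  · obtain rfl : v' = v := by simpa using h
    simp [redCost, vertexCost]
  all_goals simp [redCost, vertexCost]

theorem sum_redCost_perm (θ : V → Option K → ℝ) {σ : (V ⊕ K) ≃ (V ⊕ K)}
    (hσ : ∀ w, σ w ∈ redLab Lab w) :
    ∑ w, redCost θ w (σ w) =
      (ilapCost θ (ilapOfPerm σ) + ilapCost θ (ilapOfPerm σ.symm)) / 2 := by
  have hback : ∑ w, vertexCost θ (σ w) w = ∑ w, vertexCost θ w (σ.symm w) := by
    simpa using σ.sum_comp (fun w => vertexCost θ w (σ.symm w))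
  rw [← sum_vertexCost_perm, ← sum_vertexCost_perm, ← hback, ← sum_add_distrib, sum_div]
  exact sum_congr rfl fun w _ => redCost_eq_of_mem_redLab θ (hσ w)

end Reduction

/-- Proposition 3: the optimal value of the ILAP `P` equals the optimal value of the
reduced LAP `P'`. -/
theorem statement11 {V K : Type*} [Fintype V] [Fintype K] [DecidableEq V] [DecidableEq K]
    (Lab : V → Finset (Option K)) (hdum : ∀ v, (none : Option K) ∈ Lab v)
    (θ : V → Option K → ℝ) :
    ∀ m : ℝ,
      IsLeast {c : ℝ | ∃ x : V → Option K, IlapFeasible Lab x ∧ ilapCost θ x = c} m ↔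
      IsLeast {c : ℝ | ∃ x' : (V ⊕ K) ≃ (V ⊕ K), (∀ w, x' w ∈ redLab Lab w) ∧
        ∑ w : V ⊕ K, redCost θ w (x' w) = c} m := by
  refine isLeast_iff_of_subset_of_forall_eq_midpoint ?_ ?_
  · rintro _ ⟨x, hx, rfl⟩
    have hinv := involutive_permOfIlap hx
    refine ⟨hinv.toPerm _, permOfIlap_mem_redLab hx, ?_⟩
    rw [sum_redCost_perm θ (permOfIlap_mem_redLab hx), hinv.toPerm_symm,
      ilapOfPerm_toPerm_permOfIlap hx, add_self_div_two]
  · rintro _ ⟨σ, hσ, rfl⟩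
    exact ⟨_, ⟨_, ilapFeasible_ilapOfPerm hdum hσ, rfl⟩,
      _, ⟨_, ilapFeasible_ilapOfPerm hdum (symm_mem_redLab hσ), rfl⟩, sum_redCost_perm θ hσ⟩
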